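/- For all positive integers m and n, χ₂(K_m □ K_n) ≤ (n + m!) · H_m, where H_m = 1 + 1/2 + ⋯ + 1/m. In particular, for each fixed positive integer m, χ₂(K_m □ K_n) = (1 + o(1)) · n · H_m as n → ∞. -/

import Mathlib

/-- `f` is a 2-ranking of `G`: every path of length 1 or 2 is well-ranked, i.e. the
endpoints of each edge get distinct ranks, and whenever `u, w, v` is a path of length 2
whose endpoints `u, v` get equal ranks, the interior vertex `w` gets a higher rank. -/
def IsTwoRanking {V : Type*} (G : SimpleGraph V) (f : V → ℕ) : Prop :=
  (∀ u v, G.Adj u v → f u ≠ f v) ∧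
  ∀ u v w, G.Adj u w → G.Adj w v → u ≠ v → f u = f v → f u < f w

/-- The 2-ranking number `χ₂(G)`: the least `n` such that `G` has a 2-ranking using
`n` ranks (ranks taken from `{0, …, n-1}`). -/
noncomputable def twoRankingNumber {V : Type*} (G : SimpleGraph V) : ℕ :=
  sInf {n | ∃ f : V → ℕ, IsTwoRanking G f ∧ ∀ v, f v < n}

/-!
In a 2-ranking of `K_m □ K_n`, two cells of equal rank lie in different rows and columns, and
both other corners of the rectangle they span rank higher. Hence the rank class of a cell `v`
has at most `g v + 1` members, where `g v` counts the cells of its column ranked above `v`. As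
`g` is a bijection onto `{0, …, m-1}` in every column, the number of ranks, `∑ᵥ 1 / |class v|`,
is at least `n · H_m`.

Conversely, index the columns by a block `b` and a digit string `w` with `w t ≤ t` (there are
`m!` of these), let `σ_w = τ_{m-1} ⋯ τ₀` where `τ_t` transposes `w t` and `t`, and put the cell
in row `σ_w t` at level `t`. Cells of level `t` whose columns differ only in the digit at `t`
form a rank class of size `t + 1`, and lower levels get higher ranks. For two such columns
`σ_{w'}⁻¹ σ_w` permutes `{0, …, t}` and moves `t`, so the corners of the class lie at lower
levels. Each column meets every level once, so `#blocks · m! · H_m` ranks are used.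
-/

open Finset SimpleGraph Function

abbrev rookGraph (α β : Type*) : SimpleGraph (α × β) := (⊤ : SimpleGraph α) □ (⊤ : SimpleGraph β)

section TwoRanking

variable {V V' : Type*} {G : SimpleGraph V} {G' : SimpleGraph V'}

lemma isTwoRanking_of_injective {f : V → ℕ} (hf : Injective f) : IsTwoRanking G f :=
  ⟨fun _ _ h => hf.ne h.ne, fun _ _ _ _ _ huv heq => absurd (hf heq) huv⟩

lemma twoRankingNumber_le {f : V → ℕ} {N : ℕ} (hf : IsTwoRanking G f) (hN : ∀ v, f v < N) :
    twoRankingNumber G ≤ N :=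
  Nat.sInf_le ⟨f, hf, hN⟩

lemma exists_isTwoRanking_lt_twoRankingNumber [Finite V] (G : SimpleGraph V) :
    ∃ f, IsTwoRanking G f ∧ ∀ v, f v < twoRankingNumber G := by
  have := Fintype.ofFinite V
  let e := Fintype.equivFin V
  have hne : {n | ∃ f : V → ℕ, IsTwoRanking G f ∧ ∀ v, f v < n}.Nonempty :=
    ⟨_, fun v => e v, isTwoRanking_of_injective (Fin.val_injective.comp e.injective),
      fun v => (e v).isLt⟩
  exact Nat.sInf_mem hne

lemma IsTwoRanking.comp_hom {f : V' → ℕ} (hf : IsTwoRanking G' f) (φ : G →g G')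
    (hφ : Injective φ) : IsTwoRanking G (f ∘ φ) :=
  ⟨fun _ _ h => hf.1 _ _ (φ.map_adj h),
    fun _ _ _ huw hwv huv => hf.2 _ _ _ (φ.map_adj huw) (φ.map_adj hwv) (hφ.ne huv)⟩

lemma twoRankingNumber_le_of_injective [Finite V'] (φ : G →g G') (hφ : Injective φ) :
    twoRankingNumber G ≤ twoRankingNumber G' := by
  obtain ⟨f, hf, hlt⟩ := exists_isTwoRanking_lt_twoRankingNumber G'
  exact twoRankingNumber_le (hf.comp_hom φ hφ) fun v => hlt (φ v)

lemma IsTwoRanking.comp_strictMonoOn {f : V → ℕ} (hf : IsTwoRanking G f) {e : ℕ → ℕ}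
    (he : StrictMonoOn e (Set.range f)) : IsTwoRanking G (e ∘ f) := by
  have heq : ∀ u v, e (f u) = e (f v) ↔ f u = f v := fun u v =>
    he.injOn.eq_iff (Set.mem_range_self u) (Set.mem_range_self v)
  refine ⟨fun u v h => ?_, fun u v w huw hwv huv h => ?_⟩
  · simpa only [comp_apply, ne_eq, heq] using hf.1 u v h
  · rw [comp_apply, comp_apply, heq] at h
    exact he (Set.mem_range_self u) (Set.mem_range_self w) (hf.2 u v w huw hwv huv h)

/-- Only the relative order of the ranks matters: rank `c` is replaced by the number of values
below `c`. -/
lemma twoRankingNumber_le_card_image [Fintype V] {f : V → ℕ} (hf : IsTwoRanking G f) :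
    twoRankingNumber G ≤ #(univ.image f) := by
  let e : ℕ → ℕ := fun c => #{d ∈ univ.image f | d < c}
  have he : StrictMonoOn e (Set.range f) := by
    rintro _ ⟨u, rfl⟩ _ ⟨v, rfl⟩ huv
    refine card_lt_card (ssubset_iff_of_subset (fun d hd => ?_) |>.2 ⟨f u, ?_⟩)
    · simp only [mem_filter] at hd ⊢
      exact ⟨hd.1, hd.2.trans huv⟩
    · simpa using huv
  refine twoRankingNumber_le (hf.comp_strictMonoOn he) fun v => card_lt_card ?_
  exact ssubset_iff_of_subset (filter_subset _ _) |>.2 ⟨f v, by simp⟩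

end TwoRanking

section Counting

variable {ι κ : Type*} [Fintype ι]

lemma card_image_eq_sum_inv_card_fiber [DecidableEq κ] (f : ι → κ) :
    (#(univ.image f) : ℚ) = ∑ i, (#{j | f j = f i} : ℚ)⁻¹ := by
  rw [← sum_fiberwise_of_maps_to (g := f) (fun i _ => mem_image_of_mem f (mem_univ i)),
    card_eq_sum_ones, Nat.cast_sum]
  refine sum_congr rfl fun c hc => ?_
  obtain ⟨i, -, rfl⟩ := mem_image.1 hc
  have hfiber : ∀ j ∈ ({j | f j = f i} : Finset ι),
      (#{k | f k = f j} : ℚ)⁻¹ = (#{k | f k = f i} : ℚ)⁻¹ := by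
    intro j hj
    rw [(mem_filter.1 hj).2]
  rw [sum_congr rfl hfiber, sum_const, nsmul_eq_mul, Nat.cast_one,
    mul_inv_cancel₀ (Nat.cast_ne_zero.2 (card_pos.2 ⟨i, by simp⟩).ne')]

lemma sum_inv_succ_eq_harmonic {g : ι → ℕ} (hg : Injective g) (hlt : ∀ i, g i < Fintype.card ι) :
    ∑ i, ((g i : ℚ) + 1)⁻¹ = harmonic (Fintype.card ι) := by
  have himage : univ.image g = range (Fintype.card ι) :=
    eq_of_subset_of_card_le (fun k hk => by obtain ⟨i, -, rfl⟩ := mem_image.1 hk; simp [hlt])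
      (by rw [card_range, card_image_of_injective _ hg, card_univ])
  rw [harmonic, ← himage, sum_image fun i _ j _ h => hg h]
  push_cast
  rfl

variable [LinearOrder κ]

lemma card_filter_lt_lt_card (h : ι → κ) (i : ι) : #{j | h i < h j} < Fintype.card ι :=
  card_lt_card (ssubset_iff_of_subset (subset_univ _) |>.2 ⟨i, by simp⟩)

lemma injective_card_filter_lt {h : ι → κ} (hh : Injective h) :
    Injective fun i => #{j | h i < h j} := by
  have hmono : ∀ i i', h i < h i' → #{j | h i' < h j} < #{j | h i < h j} := by
    intro i i' hii'
    refine card_lt_card (ssubset_iff_of_subset (fun j hj => ?_) |>.2 ⟨i', by simp [hii']⟩)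
    simp only [mem_filter, mem_univ, true_and] at hj ⊢
    exact hii'.trans hj
  intro i i' heq
  by_contra hne
  rcases (hh.ne hne).lt_or_gt with hlt | hlt
  exacts [(hmono _ _ hlt).ne' heq, (hmono _ _ hlt).ne heq]

end Counting

section LowerBound

variable {α β : Type*}

/-- The other corner `(v.1, u.2)` is covered by exchanging `u` and `v`. -/
lemma isTwoRanking_rookGraph_iff {f : α × β → ℕ} :
    IsTwoRanking (rookGraph α β) f ↔
      ∀ u v, u ≠ v → f u = f v → u.1 ≠ v.1 ∧ u.2 ≠ v.2 ∧ f u < f (u.1, v.2) := by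
  constructor
  · rintro ⟨hadj, hpath⟩ u v huv heq
    have hrow : u.1 ≠ v.1 := fun h =>
      hadj u v (boxProd_adj.2 (.inr ⟨fun h' => huv (Prod.ext h h'), h⟩)) heq
    have hcol : u.2 ≠ v.2 := fun h =>
      hadj u v (boxProd_adj.2 (.inl ⟨fun h' => huv (Prod.ext h' h), h⟩)) heq
    exact ⟨hrow, hcol, hpath u v (u.1, v.2) (boxProd_adj.2 (.inr ⟨hcol, rfl⟩))
      (boxProd_adj.2 (.inl ⟨hrow, rfl⟩)) huv heq⟩
  · intro h
    refine ⟨fun u v huv heq => ?_, fun u v x hux hxv huv heq => ?_⟩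
    · obtain ⟨hrow, hcol, -⟩ := h u v huv.ne heq
      rcases boxProd_adj.1 huv with ⟨-, h2⟩ | ⟨-, h1⟩
      exacts [hcol h2, hrow h1]
    · obtain ⟨hrow, hcol, hlt⟩ := h u v huv heq
      rcases boxProd_adj.1 hux with ⟨-, hu2⟩ | ⟨-, hu1⟩ <;>
        rcases boxProd_adj.1 hxv with ⟨-, hv2⟩ | ⟨-, hv1⟩
      · exact absurd (hu2.trans hv2) hcol
      · obtain ⟨-, -, hlt'⟩ := h v u huv.symm heq.symm
        rwa [heq, show x = (v.1, u.2) from Prod.ext hv1 hu2.symm]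
      · rwa [show x = (u.1, v.2) from Prod.ext hu1.symm hv2]
      · exact absurd (hu1.trans hv1) hrow

variable [Fintype α] {f : α × β → ℕ}

lemma sum_column_inv_card_filter_lt_add_one (hf : IsTwoRanking (rookGraph α β) f) (j : β) :
    ∑ i, ((#{i' | f (i, j) < f (i', j)} : ℚ) + 1)⁻¹ = harmonic (Fintype.card α) := by
  refine sum_inv_succ_eq_harmonic (injective_card_filter_lt fun i i' h => ?_)
    (card_filter_lt_lt_card _)
  by_contra hne
  exact (isTwoRanking_rookGraph_iff.1 hf _ _ (by simpa using hne) h).2.1 rfl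

variable [Fintype β]

lemma card_fiber_le_card_filter_lt_add_one (hf : IsTwoRanking (rookGraph α β) f) (v : α × β) :
    #{u | f u = f v} ≤ #{i | f v < f (i, v.2)} + 1 := by
  classical
  have hv : v ∈ ({u | f u = f v} : Finset _) := by simp
  rw [← card_erase_add_one hv, add_le_add_iff_right]
  refine card_le_card_of_injOn Prod.fst (fun u hu => ?_) fun u hu u' hu' hrow => ?_
  · simp only [coe_erase, Set.mem_sdiff, mem_coe, mem_filter, mem_univ, true_and,
      Set.mem_singleton_iff] at hu
    obtain ⟨-, -, hlt⟩ := isTwoRanking_rookGraph_iff.1 hf u v hu.2 hu.1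
    simpa [← hu.1] using hlt
  · simp only [coe_erase, Set.mem_sdiff, mem_coe, mem_filter, mem_univ, true_and] at hu hu'
    by_contra hne
    exact (isTwoRanking_rookGraph_iff.1 hf u u' hne (hu.1.trans hu'.1.symm)).1 hrow

lemma card_mul_harmonic_le_card_image (hf : IsTwoRanking (rookGraph α β) f) :
    (Fintype.card β : ℚ) * harmonic (Fintype.card α) ≤ #(univ.image f) := by
  have hfiber_pos : ∀ v, (0 : ℚ) < #{u | f u = f v} := fun v =>
    Nat.cast_pos.2 (card_pos.2 ⟨v, by simp⟩)
  calc (Fintype.card β : ℚ) * harmonic (Fintype.card α)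
      = ∑ j : β, ∑ i : α, ((#{i' | f (i, j) < f (i', j)} : ℚ) + 1)⁻¹ := by
        rw [sum_congr rfl fun j _ => sum_column_inv_card_filter_lt_add_one hf j, sum_const,
          card_univ, nsmul_eq_mul]
    _ = ∑ v : α × β, ((#{i | f v < f (i, v.2)} : ℚ) + 1)⁻¹ := by
        rw [Fintype.sum_prod_type_right]
    _ ≤ ∑ v : α × β, (#{u | f u = f v} : ℚ)⁻¹ := sum_le_sum fun v _ =>
        inv_anti₀ (hfiber_pos v) (by exact_mod_cast card_fiber_le_card_filter_lt_add_one hf v)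
    _ = #(univ.image f) := (card_image_eq_sum_inv_card_fiber f).symm

lemma card_mul_harmonic_le_twoRankingNumber :
    (Fintype.card β : ℚ) * harmonic (Fintype.card α) ≤ twoRankingNumber (rookGraph α β) := by
  obtain ⟨f, hf, hlt⟩ := exists_isTwoRanking_lt_twoRankingNumber (rookGraph α β)
  refine (card_mul_harmonic_le_card_image hf).trans ?_
  have himage : univ.image f ⊆ range (twoRankingNumber (rookGraph α β)) := fun c hc => by
    obtain ⟨v, -, rfl⟩ := mem_image.1 hc
    exact mem_range.2 (hlt v)
  exact_mod_cast (card_le_card himage).trans (card_range _).le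

end LowerBound

lemma Equiv.Perm.inv_apply_lt_of_apply_eq_self {n k : ℕ} {π : Equiv.Perm (Fin n)}
    (hπ : ∀ x : Fin n, k ≤ x → π x = x) {y : Fin n} (hy : (y : ℕ) < k) :
    ((π⁻¹ y : Fin n) : ℕ) < k := by
  by_contra! h
  have hfix : y = π⁻¹ y := (π.apply_symm_apply y).symm.trans (hπ _ h)
  exact (hfix ▸ hy).not_ge h

lemma Nat.mul_add_lt_mul_add {K a a' c c' : ℕ} (hc : c < K) (ha : a < a') :
    K * a + c < K * a' + c' := by
  nlinarith

lemma Nat.mul_add_eq_mul_add_iff {K a a' c c' : ℕ} (hc : c < K) (hc' : c' < K) :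
    K * a + c = K * a' + c' ↔ a = a' ∧ c = c' := by
  refine ⟨fun h => ?_, by rintro ⟨rfl, rfl⟩; rfl⟩
  rcases lt_trichotomy a a' with ha | rfl | ha
  · exact absurd h (Nat.mul_add_lt_mul_add hc ha).ne
  · exact ⟨rfl, by omega⟩
  · exact absurd h (Nat.mul_add_lt_mul_add hc' ha).ne'

abbrev FactorialDigits (m : ℕ) := (t : Fin m) → Fin (t + 1)

namespace FactorialDigits

variable {m : ℕ}

lemma card_eq_factorial : Fintype.card (FactorialDigits m) = m.factorial := by
  rw [Fintype.card_pi]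
  simp only [Fintype.card_fin]
  rw [Fin.prod_univ_eq_prod_range (· + 1), prod_range_add_one_eq_factorial]

def partialPerm (w : FactorialDigits m) : ℕ → Equiv.Perm (Fin m)
  | 0 => 1
  | k + 1 =>
    if h : k < m then Equiv.swap (Fin.castLE h (w ⟨k, h⟩)) ⟨k, h⟩ * partialPerm w k
    else partialPerm w k

def perm (w : FactorialDigits m) : Equiv.Perm (Fin m) := partialPerm w m

lemma partialPerm_apply_of_le (w : FactorialDigits m) {k : ℕ} {x : Fin m} (hx : k ≤ x) :
    partialPerm w k x = x := by
  induction k with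
  | zero => rfl
  | succ k ih =>
    rw [partialPerm]
    split_ifs with h
    · rw [Equiv.Perm.mul_apply, ih (by omega)]
      have hw : (w ⟨k, h⟩ : ℕ) ≤ k := Nat.lt_succ_iff.1 (w ⟨k, h⟩).isLt
      exact Equiv.swap_apply_of_ne_of_ne (Fin.ne_of_val_ne (Nat.ne_of_gt (hw.trans_lt hx)))
        (Fin.ne_of_val_ne (Nat.ne_of_gt hx))
    · exact ih (by omega)

lemma partialPerm_succ_apply_self (w : FactorialDigits m) (t : Fin m) :
    partialPerm w (t + 1) t = Fin.castLE t.isLt (w t) := by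
  rw [partialPerm, dif_pos t.isLt, Equiv.Perm.mul_apply, partialPerm_apply_of_le w le_rfl]
  exact Equiv.swap_apply_right _ _

lemma partialPerm_mul_inv_congr {w w' : FactorialDigits m} {k : ℕ}
    (hw : ∀ u : Fin m, k ≤ u → w u = w' u) {j : ℕ} (hj : k ≤ j) :
    partialPerm w j * (partialPerm w k)⁻¹ = partialPerm w' j * (partialPerm w' k)⁻¹ := by
  induction j, hj using Nat.le_induction with
  | base => simp
  | succ j hj ih =>
    rw [partialPerm, partialPerm]
    split_ifs with h
    · rw [mul_assoc, ih, hw ⟨j, h⟩ hj, mul_assoc]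
    · exact ih

/-- Write `perm w = R * A` with `A = partialPerm w (t + 1)`; the factor `R` is shared by `w'`,
and `A` fixes everything above `t` while `A t = w t`. -/
lemma perm_inv_perm_apply_lt {w w' : FactorialDigits m} {t : Fin m}
    (hup : ∀ u, t < u → w u = w' u) (ht : w t ≠ w' t) : (perm w')⁻¹ (perm w t) < t := by
  set A := partialPerm w (t + 1)
  set A' := partialPerm w' (t + 1)
  have hquot : perm w * A⁻¹ = perm w' * A'⁻¹ :=
    partialPerm_mul_inv_congr (fun u hu => hup u (by omega)) t.isLt
  have hρ : (perm w')⁻¹ (perm w t) = A'⁻¹ (A t) := by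
    rw [← Equiv.Perm.mul_apply, ← Equiv.Perm.mul_apply,
      show perm w = perm w' * A'⁻¹ * A by rw [← hquot, inv_mul_cancel_right]]
    group
  have hne : A'⁻¹ (A t) ≠ t := by
    rw [Ne, Equiv.Perm.inv_eq_iff_eq, partialPerm_succ_apply_self, partialPerm_succ_apply_self]
    exact fun h => ht (Fin.castLE_injective _ h)
  have hle : ((A'⁻¹ (A t) : Fin m) : ℕ) < t + 1 :=
    Equiv.Perm.inv_apply_lt_of_apply_eq_self (fun x hx => partialPerm_apply_of_le w' hx)
      (by rw [partialPerm_succ_apply_self]; exact (w t).isLt)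
  rw [hρ]
  exact lt_of_le_of_ne (Fin.le_def.2 (by omega)) hne

variable {β : Type*}

def level (v : Fin m × (β × FactorialDigits m)) : Fin m := (perm v.2.2)⁻¹ v.1

lemma level_eq_iff {v : Fin m × (β × FactorialDigits m)} {t : Fin m} :
    level v = t ↔ v.1 = perm v.2.2 t :=
  Equiv.Perm.inv_eq_iff_eq

/-- Forgets the digit at the cell's level; cells of equal level and key form a rank class. -/
def classKey (v : Fin m × (β × FactorialDigits m)) : β × FactorialDigits m :=
  (v.2.1, fun s => if s = level v then 0 else v.2.2 s)

variable [Fintype β]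

noncomputable def ranking (v : Fin m × (β × FactorialDigits m)) : ℕ :=
  Fintype.card (β × FactorialDigits m) * (level v).rev +
    Fintype.equivFin (β × FactorialDigits m) (classKey v)

lemma ranking_eq_ranking_iff {u v : Fin m × (β × FactorialDigits m)} :
    ranking u = ranking v ↔ level u = level v ∧ classKey u = classKey v := by
  rw [ranking, ranking, Nat.mul_add_eq_mul_add_iff (Fin.isLt _) (Fin.isLt _), Fin.val_inj,
    Fin.val_inj, Fin.rev_inj, (Fintype.equivFin _).injective.eq_iff]

lemma ranking_lt_ranking {u v : Fin m × (β × FactorialDigits m)} (h : level v < level u) :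
    ranking u < ranking v :=
  Nat.mul_add_lt_mul_add (Fin.isLt _) (Fin.rev_lt_rev.2 h)

/-- A rank class at level `t` is obtained by letting the digit at `t` run through
`0, …, t`. -/
lemma card_fiber_ranking (v : Fin m × (β × FactorialDigits m)) :
    #{u : Fin m × (β × FactorialDigits m) | ranking u = ranking v} = level v + 1 := by
  classical
  rw [filter_congr fun u _ => ranking_eq_ranking_iff]
  obtain ⟨i, b, w⟩ := v
  simp only [classKey]
  generalize level (i, (b, w)) = t
  rw [← Fintype.card_fin (t + 1), ← card_univ]
  symm
  refine card_bij' (fun k _ => (perm (update w t k) t, (b, update w t k))) (fun u _ => u.2.2 t)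
    (fun k _ => ?_) (fun _ _ => mem_univ _) (fun k _ => by simp) (fun u hu => ?_)
  · have hlevel : level (perm (update w t k) t, (b, update w t k)) = t := level_eq_iff.2 rfl
    simp only [mem_filter, mem_univ, true_and, hlevel, Prod.mk.injEq]
    refine funext fun s => ?_
    split_ifs with hs
    · rfl
    · exact update_of_ne hs _ _
  · simp only [mem_filter, mem_univ, true_and, Prod.mk.injEq] at hu
    obtain ⟨hlevel, rfl, hkey⟩ := hu
    have hw : update w t (u.2.2 t) = u.2.2 := by
      refine funext fun s => ?_
      by_cases hs : s = t
      · subst hs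
        exact update_self _ _ _
      · simpa [hlevel, hs, update_of_ne hs] using (congrFun hkey s).symm
    rw [hw, ← level_eq_iff.1 hlevel]

lemma isTwoRanking_ranking :
    IsTwoRanking (rookGraph (Fin m) (β × FactorialDigits m)) ranking := by
  refine isTwoRanking_rookGraph_iff.2 fun u v huv heq => ?_
  obtain ⟨hlevel, hkey⟩ := ranking_eq_ranking_iff.1 heq
  obtain ⟨i, b, w⟩ := u
  obtain ⟨i', b', w'⟩ := v
  simp only [classKey, Prod.mk.injEq] at hkey
  obtain ⟨rfl, hdigits⟩ := hkey
  obtain ⟨t, hlevel_t⟩ : ∃ t, level (i, (b, w)) = t := ⟨_, rfl⟩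
  rw [hlevel_t] at hlevel hdigits
  rw [← hlevel] at hdigits
  have hoff : ∀ s, s ≠ t → w s = w' s := fun s hs => by
    simpa [hs] using congrFun hdigits s
  have hi : i = perm w t := level_eq_iff.1 hlevel_t
  have hi' : i' = perm w' t := level_eq_iff.1 hlevel.symm
  have ht : w t ≠ w' t := by
    intro h
    have hw : w = w' := funext fun s => if hs : s = t then hs ▸ h else hoff s hs
    subst hw
    exact huv (by rw [hi, hi'])
  have hcorner := perm_inv_perm_apply_lt (fun s hs => hoff s hs.ne') ht
  refine ⟨fun (h : i = i') => ?_, fun h => ht (by rw [(Prod.mk.inj h).2]), ranking_lt_ranking ?_⟩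
  · rw [hi, hi'] at h
    simp [h] at hcorner
  · change (perm w')⁻¹ i < level (i, (b, w))
    rwa [hlevel_t, hi]

/-- Every column meets each level once, so `∑ 1 / |class|` is a sum of harmonic numbers. -/
lemma card_image_ranking :
    (#(univ.image (ranking (m := m) (β := β))) : ℚ) =
      Fintype.card β * m.factorial * harmonic m := by
  have hcolumn : ∀ c : β × FactorialDigits m,
      ∑ i : Fin m, ((level (i, c) : ℚ) + 1)⁻¹ = harmonic m := fun c => by
    simpa using sum_inv_succ_eq_harmonic (g := fun i => (level (i, c) : ℕ))
      (Fin.val_injective.comp (perm c.2)⁻¹.injective) fun i => by simp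
  rw [card_image_eq_sum_inv_card_fiber, Fintype.sum_prod_type_right]
  simp only [card_fiber_ranking, Nat.cast_add, Nat.cast_one, hcolumn, sum_const, card_univ,
    nsmul_eq_mul, Fintype.card_prod, card_eq_factorial, Nat.cast_mul]

end FactorialDigits

lemma twoRankingNumber_rookGraph_le_of_embedding {α β γ : Type*} [Finite α] [Finite γ]
    (e : β ↪ γ) : twoRankingNumber (rookGraph α β) ≤ twoRankingNumber (rookGraph α γ) := by
  refine twoRankingNumber_le_of_injective ⟨Prod.map id e, fun {u v} h => ?_⟩
    (injective_id.prodMap e.injective)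
  rcases boxProd_adj.1 h with ⟨h1, h2⟩ | ⟨h2, h1⟩
  · exact boxProd_adj.2 (.inl ⟨h1, by simp [h2]⟩)
  · exact boxProd_adj.2 (.inr ⟨e.injective.ne h2, by simp [h1]⟩)

lemma twoRankingNumber_rookGraph_le (m n : ℕ) :
    (twoRankingNumber (rookGraph (Fin m) (Fin n)) : ℚ) ≤ (n + m.factorial) * harmonic m := by
  set q := n / m.factorial + 1
  have hcard : Fintype.card (Fin n) ≤ Fintype.card (Fin q × FactorialDigits m) := by
    rw [Fintype.card_prod, Fintype.card_fin, Fintype.card_fin, FactorialDigits.card_eq_factorial,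
      mul_comm]
    exact (Nat.lt_mul_div_succ n m.factorial_pos).le
  obtain ⟨e⟩ := Function.Embedding.nonempty_of_card_le hcard
  have hq : (q : ℚ) * m.factorial ≤ n + m.factorial := by
    exact_mod_cast show q * m.factorial ≤ n + m.factorial by
      rw [add_mul, one_mul]
      exact Nat.add_le_add_right (Nat.div_mul_le_self n _) _
  calc (twoRankingNumber (rookGraph (Fin m) (Fin n)) : ℚ)
      ≤ twoRankingNumber (rookGraph (Fin m) (Fin q × FactorialDigits m)) := by
        exact_mod_cast twoRankingNumber_rookGraph_le_of_embedding e
    _ ≤ #(univ.image FactorialDigits.ranking) := by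
        exact_mod_cast twoRankingNumber_le_card_image FactorialDigits.isTwoRanking_ranking
    _ = q * m.factorial * harmonic m := by
        rw [FactorialDigits.card_image_ranking, Fintype.card_fin]
    _ ≤ (n + m.factorial) * harmonic m :=
        mul_le_mul_of_nonneg_right hq (by unfold harmonic; positivity)

lemma natCast_mul_harmonic_le_twoRankingNumber_rookGraph (m n : ℕ) :
    (n : ℚ) * harmonic m ≤ twoRankingNumber (rookGraph (Fin m) (Fin n)) := by
  simpa using card_mul_harmonic_le_twoRankingNumber (α := Fin m) (β := Fin n)

open Filter Asymptotics in
lemma Asymptotics.isEquivalent_of_le_of_le_add {u v : ℕ → ℝ} {C : ℝ}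
    (hv : Tendsto v atTop atTop) (hlow : ∀ n, v n ≤ u n) (hup : ∀ n, u n ≤ v n + C) :
    u ~[atTop] v := by
  refine (IsBigO.of_bound C (Eventually.of_forall fun n => ?_)).trans_isLittleO
    ((isLittleO_one_left_iff ℝ).2 (tendsto_norm_atTop_atTop.comp hv))
  rw [Pi.sub_apply, norm_one, mul_one, Real.norm_eq_abs, abs_le]
  constructor <;> linarith [hlow n, hup n]

lemma sum_range_one_div_succ_eq_harmonic (m : ℕ) :
    ∑ i ∈ range m, (1 : ℝ) / (i + 1) = harmonic m := by
  simp [harmonic, one_div]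

open SimpleGraph in
/-- For all positive `m, n`: `χ₂(K_m □ K_n) ≤ (n + m!) · H_m`; and, for each fixed
positive `m`, `χ₂(K_m □ K_n) = (1 + o(1)) · n · H_m` as `n → ∞`. -/
theorem twoRankingNumber_boxProd_complete_asymptotic :
    (∀ m n : ℕ, 0 < m → 0 < n →
      (twoRankingNumber ((⊤ : SimpleGraph (Fin m)) □ (⊤ : SimpleGraph (Fin n))) : ℝ) ≤
        ((n : ℝ) + (m.factorial : ℝ)) * (∑ i ∈ Finset.range m, (1 : ℝ) / (i + 1))) ∧
    (∀ m : ℕ, 0 < m →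
      Asymptotics.IsEquivalent Filter.atTop
        (fun n : ℕ =>
          (twoRankingNumber ((⊤ : SimpleGraph (Fin m)) □ (⊤ : SimpleGraph (Fin n))) : ℝ))
        (fun n : ℕ => (n : ℝ) * (∑ i ∈ Finset.range m, (1 : ℝ) / (i + 1)))) := by
  simp only [sum_range_one_div_succ_eq_harmonic]
  refine ⟨fun m n _ _ => by exact_mod_cast twoRankingNumber_rookGraph_le m n, fun m hm => ?_⟩
  refine Asymptotics.isEquivalent_of_le_of_le_add (C := m.factorial * harmonic m)
    (tendsto_natCast_atTop_atTop.atTop_mul_const (by exact_mod_cast harmonic_pos hm.ne'))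
    (fun n => by exact_mod_cast natCast_mul_harmonic_le_twoRankingNumber_rookGraph m n)
    (fun n => ?_)
  rw [← add_mul]
  exact_mod_cast twoRankingNumber_rookGraph_le m n
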